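/- (One-dimensional variational characterization of σ₁ of the geodesic ball, stated after (2.1)) Let κ ≤ 0, let n ≥ 2 be an integer, let F solve the ODE of the paper with F(0) = 0, F'(0) = 1, and let R > 0. For every continuously differentiable function φ : [0,R] → ℝ with φ(0) = 0 and φ(R) ≠ 0, one has ∫₀^R ( φ'(r)² + (n−1) φ(r)²/sn_κ(r)² ) sn_κ(r)^{n−1} dr ≥ (F'(R)/F(R)) · φ(R)² sn_κ(R)^{n−1}, with equality when φ = F. In particular F'(R)/F(R) is the minimal value of the quotient Q(φ) = ∫₀^R (φ'² + (n−1)φ²/sn_κ²) sn_κ^{n−1} dr / ( φ(R)² sn_κ(R)^{n−1} ) over such φ. -/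

import Mathlib

open Set

noncomputable def snk (κ : ℝ) (t : ℝ) : ℝ :=
  if κ = 0 then t else Real.sinh (Real.sqrt (-κ) * t) / Real.sqrt (-κ)

open Filter Topology MeasureTheory intervalIntegral

/-!
With `q = F'/F`, the equation for `F` gives the Picone identity
`(φ'² + c φ²/sn²) snᵐ - (q φ² snᵐ)' = (φ' - q φ)² snᵐ ≥ 0` on `(0, ∞)`,
so the energy of `φ` on `[0, R]` is at least the boundary term `q(R) φ(R)² sn(R)ᵐ`,
with equality for `φ = F`. The boundary term at `0` vanishes: `F' snᵐ` is increasing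
(its derivative is `c F snᵐ⁻²`), hence bounded near `0`, while `φ²/F → 0` because
`φ = O(r)` and `F ≥ r/2` near `0`.
-/

theorem differentiable_snk (κ : ℝ) : Differentiable ℝ (snk κ) := by
  unfold snk; split_ifs <;> fun_prop

theorem monotone_snk (κ : ℝ) : Monotone (snk κ) := by
  intro s t hst
  unfold snk; split_ifs
  · exact hst
  · gcongr
    exact Real.sinh_le_sinh.2 (by gcongr)

theorem le_snk {κ : ℝ} (hκ : κ ≤ 0) {t : ℝ} (ht : 0 ≤ t) : t ≤ snk κ t := by
  unfold snk; split_ifs with h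
  · exact le_rfl
  · have ha : 0 < Real.sqrt (-κ) := Real.sqrt_pos.2 (neg_pos.2 (lt_of_le_of_ne hκ h))
    rw [le_div_iff₀ ha, mul_comm]
    exact Real.self_le_sinh_iff.2 (by positivity)

theorem snk_pos {κ : ℝ} (hκ : κ ≤ 0) {t : ℝ} (ht : 0 < t) : 0 < snk κ t :=
  ht.trans_le (le_snk hκ ht.le)

theorem hasDerivAt_snk_pow (κ : ℝ) (m : ℕ) {r : ℝ} (hr : snk κ r ≠ 0) :
    HasDerivAt (fun t => snk κ t ^ m) (m * deriv (snk κ) r / snk κ r * snk κ r ^ m) r := by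
  refine ((differentiable_snk κ r).hasDerivAt.fun_pow m).congr_deriv ?_
  rcases m with _ | m
  · simp
  · simp only [Nat.add_sub_cancel]
    field_simp
    ring

noncomputable def energyDensity (κ c : ℝ) (m : ℕ) (φ : ℝ → ℝ) (r : ℝ) : ℝ :=
  (deriv φ r ^ 2 + c * φ r ^ 2 / snk κ r ^ 2) * snk κ r ^ m

noncomputable def piconeTerm (κ : ℝ) (m : ℕ) (F φ : ℝ → ℝ) (r : ℝ) : ℝ :=
  deriv F r / F r * (φ r ^ 2 * snk κ r ^ m)

theorem energyDensity_nonneg {κ c : ℝ} (hκ : κ ≤ 0) (hc : 0 ≤ c) (m : ℕ) (φ : ℝ → ℝ) {r : ℝ}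
    (hr : 0 ≤ r) : 0 ≤ energyDensity κ c m φ r := by
  have := hr.trans (le_snk hκ hr)
  unfold energyDensity
  positivity

section Picone

variable {κ c : ℝ} {m : ℕ} {F φ : ℝ → ℝ} {r : ℝ}

theorem hasDerivAt_deriv_mul_snk_pow (hF' : DifferentiableAt ℝ (deriv F) r)
    (hs : snk κ r ≠ 0)
    (hode : deriv (deriv F) r + m * (deriv (snk κ) r / snk κ r) * deriv F r
      - c / snk κ r ^ 2 * F r = 0) :
    HasDerivAt (fun t => deriv F t * snk κ t ^ m) (c * F r / snk κ r ^ 2 * snk κ r ^ m) r := by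
  refine (hF'.hasDerivAt.mul (hasDerivAt_snk_pow κ m hs)).congr_deriv ?_
  linear_combination (snk κ r ^ m) * hode

theorem hasDerivAt_piconeTerm (hF : DifferentiableAt ℝ F r)
    (hF' : DifferentiableAt ℝ (deriv F) r) (hφ : DifferentiableAt ℝ φ r)
    (hFr : F r ≠ 0) (hs : snk κ r ≠ 0)
    (hode : deriv (deriv F) r + m * (deriv (snk κ) r / snk κ r) * deriv F r
      - c / snk κ r ^ 2 * F r = 0) :
    HasDerivAt (piconeTerm κ m F φ)
      (energyDensity κ c m φ r - (deriv φ r - deriv F r / F r * φ r) ^ 2 * snk κ r ^ m) r := by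
  refine ((hF'.hasDerivAt.div hF.hasDerivAt hFr).mul
    ((hφ.hasDerivAt.fun_pow 2).mul (hasDerivAt_snk_pow κ m hs))).congr_deriv ?_
  have hF'' : deriv (deriv F) r
      = c / snk κ r ^ 2 * F r - m * (deriv (snk κ) r / snk κ r) * deriv F r := by
    linear_combination hode
  simp only [energyDensity, hF'', Pi.mul_apply, Pi.div_apply]
  field_simp
  ring

end Picone

structure IsRadialSolution (κ c : ℝ) (m : ℕ) (F : ℝ → ℝ) : Prop where
  differentiableOn : DifferentiableOn ℝ F (Ioi 0)
  differentiableOn_deriv : DifferentiableOn ℝ (deriv F) (Ioi 0)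
  ode : ∀ r > 0, deriv (deriv F) r + m * (deriv (snk κ) r / snk κ r) * deriv F r
      - c / snk κ r ^ 2 * F r = 0
  pos : ∀ r > 0, 0 < F r
  deriv_pos : ∀ r > 0, 0 < deriv F r

namespace IsRadialSolution

variable {κ c : ℝ} {m : ℕ} {F φ : ℝ → ℝ} {R : ℝ}

theorem monotoneOn_deriv_mul_snk_pow (h : IsRadialSolution κ c m F) (hκ : κ ≤ 0) (hc : 0 ≤ c) :
    MonotoneOn (fun t => deriv F t * snk κ t ^ m) (Ioi 0) := by
  have hderiv : ∀ r ∈ Ioi (0 : ℝ), HasDerivAt (fun t => deriv F t * snk κ t ^ m)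
      (c * F r / snk κ r ^ 2 * snk κ r ^ m) r := fun r hr =>
    hasDerivAt_deriv_mul_snk_pow (h.differentiableOn_deriv.differentiableAt (Ioi_mem_nhds hr))
      (snk_pos hκ hr).ne' (h.ode r hr)
  refine monotoneOn_of_hasDerivWithinAt_nonneg (convex_Ioi 0)
    (fun r hr => (hderiv r hr).continuousAt.continuousWithinAt)
    (fun r hr => (hderiv r (interior_subset hr)).hasDerivWithinAt) (fun r hr => ?_)
  rw [interior_Ioi] at hr
  have := h.pos r hr
  have := snk_pos hκ hr
  positivity

theorem tendsto_piconeTerm_zero (h : IsRadialSolution κ c m F) (hκ : κ ≤ 0) (hc : 0 ≤ c)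
    (hlim : Tendsto (fun t => φ t ^ 2 / F t) (𝓝[>] 0) (𝓝 0)) :
    Tendsto (piconeTerm κ m F φ) (𝓝[>] 0) (𝓝 0) := by
  set M := deriv F 1 * snk κ 1 ^ m
  have hbound : ∀ t ∈ Ioo (0 : ℝ) 1,
      0 ≤ piconeTerm κ m F φ t ∧ piconeTerm κ m F φ t ≤ M * (φ t ^ 2 / F t) := by
    intro t ht
    have hFt := h.pos t ht.1
    have := h.deriv_pos t ht.1
    have := snk_pos hκ ht.1
    have hv : deriv F t * snk κ t ^ m ≤ M :=
      h.monotoneOn_deriv_mul_snk_pow hκ hc ht.1 (mem_Ioi.2 one_pos) ht.2.le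
    have hG : piconeTerm κ m F φ t = deriv F t * snk κ t ^ m * (φ t ^ 2 / F t) := by
      unfold piconeTerm; field_simp
    rw [hG]
    exact ⟨by positivity, by gcongr⟩
  have hM : Tendsto (fun t => M * (φ t ^ 2 / F t)) (𝓝[>] 0) (𝓝 0) := by
    simpa using hlim.const_mul M
  exact squeeze_zero'
    (eventually_of_mem (Ioo_mem_nhdsGT zero_lt_one) fun t ht => (hbound t ht).1)
    (eventually_of_mem (Ioo_mem_nhdsGT zero_lt_one) fun t ht => (hbound t ht).2) hM

theorem continuousOn_piconeTerm (h : IsRadialSolution κ c m F) (hκ : κ ≤ 0) (hc : 0 ≤ c)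
    (hφ : ContinuousOn φ (Icc 0 R)) (hφ0 : φ 0 = 0)
    (hlim : Tendsto (fun t => φ t ^ 2 / F t) (𝓝[>] 0) (𝓝 0)) :
    ContinuousOn (piconeTerm κ m F φ) (Icc 0 R) := by
  intro x hx
  rcases hx.1.eq_or_lt with rfl | hx0
  · have h0 : piconeTerm κ m F φ 0 = 0 := by simp [piconeTerm, hφ0]
    have : ContinuousWithinAt (piconeTerm κ m F φ) (Ioi 0) 0 := by
      rw [ContinuousWithinAt, h0]
      exact h.tendsto_piconeTerm_zero hκ hc hlim
    exact (continuousWithinAt_Ioi_iff_Ici.1 this).mono Icc_subset_Ici_self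
  · have hFx : ContinuousAt F x :=
      (h.differentiableOn.differentiableAt (Ioi_mem_nhds hx0)).continuousAt
    have hF'x : ContinuousAt (deriv F) x :=
      (h.differentiableOn_deriv.differentiableAt (Ioi_mem_nhds hx0)).continuousAt
    exact (hF'x.continuousWithinAt.div hFx.continuousWithinAt (h.pos x hx0).ne').mul
      (((hφ x hx).pow 2).mul ((differentiable_snk κ).continuous.continuousWithinAt.pow m))

theorem piconeTerm_le_integral (h : IsRadialSolution κ c m F) (hκ : κ ≤ 0) (hc : 0 ≤ c)
    (hR : 0 ≤ R) (hφc : ContinuousOn φ (Icc 0 R))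
    (hφd : ∀ r ∈ Ioo 0 R, DifferentiableAt ℝ φ r) (hφ0 : φ 0 = 0)
    (hlim : Tendsto (fun t => φ t ^ 2 / F t) (𝓝[>] 0) (𝓝 0))
    (hint : IntegrableOn (energyDensity κ c m φ) (Icc 0 R)) :
    piconeTerm κ m F φ R ≤ ∫ r in 0..R, energyDensity κ c m φ r := by
  have h0 : piconeTerm κ m F φ 0 = 0 := by simp [piconeTerm, hφ0]
  have := sub_le_integral_of_hasDeriv_right_of_le hR
    (h.continuousOn_piconeTerm hκ hc hφc hφ0 hlim)
    (fun r hr => (hasDerivAt_piconeTerm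
      (h.differentiableOn.differentiableAt (Ioi_mem_nhds hr.1))
      (h.differentiableOn_deriv.differentiableAt (Ioi_mem_nhds hr.1)) (hφd r hr)
      (h.pos r hr.1).ne' (snk_pos hκ hr.1).ne' (h.ode r hr.1)).hasDerivWithinAt)
    hint (fun r hr => sub_le_self _ (mul_nonneg (sq_nonneg _) (pow_nonneg (snk_pos hκ hr.1).le m)))
  rwa [h0, sub_zero] at this

theorem integral_energyDensity_self (h : IsRadialSolution κ c m F) (hκ : κ ≤ 0) (hc : 0 ≤ c)
    (hR : 0 ≤ R) (hF0 : F 0 = 0) (hFc : ContinuousWithinAt F (Ici 0) 0) :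
    ∫ r in 0..R, energyDensity κ c m F r = piconeTerm κ m F F R := by
  have hFc' : ContinuousOn F (Icc 0 R) := by
    intro x hx
    rcases hx.1.eq_or_lt with rfl | hx0
    · exact hFc.mono Icc_subset_Ici_self
    · exact (h.differentiableOn.differentiableAt (Ioi_mem_nhds hx0)).continuousAt.continuousWithinAt
  have hlim : Tendsto (fun t => F t ^ 2 / F t) (𝓝[>] 0) (𝓝 0) := by
    refine (hF0 ▸ (continuousWithinAt_Ioi_iff_Ici.2 hFc).tendsto).congr' ?_
    filter_upwards [self_mem_nhdsWithin] with t ht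
    field_simp [(h.pos t ht).ne']
  have hcont := h.continuousOn_piconeTerm hκ hc hFc' hF0 hlim
  have hderiv : ∀ r ∈ Ioo 0 R, HasDerivAt (piconeTerm κ m F F) (energyDensity κ c m F r) r := by
    intro r hr
    have hFd := h.differentiableOn.differentiableAt (Ioi_mem_nhds hr.1)
    have hFr := (h.pos r hr.1).ne'
    simpa [div_mul_cancel₀ _ hFr] using hasDerivAt_piconeTerm hFd
      (h.differentiableOn_deriv.differentiableAt (Ioi_mem_nhds hr.1)) hFd hFr
      (snk_pos hκ hr.1).ne' (h.ode r hr.1)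
  -- `F'` is not known to be bounded near `0`: integrability comes from the sign of the derivative.
  have hint : IntervalIntegrable (energyDensity κ c m F) volume 0 R := by
    refine intervalIntegrable_deriv_of_nonneg (by rwa [uIcc_of_le hR]) ?_ ?_ <;>
      rw [min_eq_left hR, max_eq_right hR]
    exacts [hderiv, fun r hr => energyDensity_nonneg hκ hc m F hr.1.le]
  rw [integral_eq_sub_of_hasDerivAt_of_le hR hcont hderiv hint]
  simp [piconeTerm, hF0]

end IsRadialSolution

theorem eventually_mul_le_of_hasDerivWithinAt {F : ℝ → ℝ} {F' a : ℝ} (hF0 : F 0 = 0)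
    (hF : HasDerivWithinAt F F' (Ici 0) 0) (ha : a < F') : ∀ᶠ t in 𝓝[>] 0, a * t ≤ F t := by
  have hslope := (hasDerivWithinAt_iff_tendsto_slope' self_notMem_Ioi).1 hF.Ioi_of_Ici
  filter_upwards [hslope (Ioi_mem_nhds ha), self_mem_nhdsWithin] with t (ht : a < slope F 0 t)
    (ht0 : 0 < t)
  rw [slope_def_field, hF0, sub_zero, sub_zero] at ht
  exact ((lt_div_iff₀ ht0).1 ht).le

section Lipschitz

variable {φ : ℝ → ℝ} {K : NNReal} {R : ℝ}

theorem abs_le_mul_of_lipschitzOnWith (hφ : LipschitzOnWith K φ (Icc 0 R)) (hφ0 : φ 0 = 0)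
    {t : ℝ} (ht : t ∈ Icc 0 R) : |φ t| ≤ K * t := by
  simpa [hφ0, Real.dist_eq, abs_of_nonneg ht.1] using
    hφ.dist_le_mul t ht 0 (left_mem_Icc.2 (ht.1.trans ht.2))

theorem tendsto_sq_div_of_lipschitzOnWith {F : ℝ → ℝ} {a : ℝ} (hφ : LipschitzOnWith K φ (Icc 0 R))
    (hφ0 : φ 0 = 0) (hR : 0 < R) (ha : 0 < a) (hF : ∀ᶠ t in 𝓝[>] 0, a * t ≤ F t) :
    Tendsto (fun t => φ t ^ 2 / F t) (𝓝[>] 0) (𝓝 0) := by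
  have hlin : Tendsto (fun t : ℝ => K ^ 2 / a * t) (𝓝[>] 0) (𝓝 0) :=
    ((continuous_const_mul _).tendsto' 0 0 (mul_zero _)).mono_left nhdsWithin_le_nhds
  refine squeeze_zero' ?_ ?_ hlin
  · filter_upwards [hF, self_mem_nhdsWithin] with t hFt (ht : 0 < t)
    have : 0 < F t := (mul_pos ha ht).trans_le hFt
    positivity
  · filter_upwards [hF, Ioo_mem_nhdsGT hR] with t hFt ht
    have hφt := abs_le_mul_of_lipschitzOnWith hφ hφ0 (Ioo_subset_Icc_self ht)
    calc φ t ^ 2 / F t ≤ (K * t) ^ 2 / (a * t) :=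
          div_le_div₀ (sq_nonneg _) (sq_le_sq' (abs_le.1 hφt).1 (abs_le.1 hφt).2)
            (mul_pos ha ht.1) hFt
      _ = K ^ 2 / a * t := by field_simp

theorem integrableOn_energyDensity {κ : ℝ} (hκ : κ ≤ 0) (c : ℝ) (m : ℕ)
    (hφ : LipschitzOnWith K φ (Icc 0 R)) (hφ0 : φ 0 = 0) :
    IntegrableOn (energyDensity κ c m φ) (Icc 0 R) := by
  rw [integrableOn_Icc_iff_integrableOn_Ioo]
  have hmeas : AEStronglyMeasurable (energyDensity κ c m φ) (volume.restrict (Ioo 0 R)) := by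
    have hφm := ((hφ.continuousOn.mono Ioo_subset_Icc_self).aestronglyMeasurable
      (μ := volume) measurableSet_Ioo).aemeasurable
    have hs := (differentiable_snk κ).continuous.measurable
    have hφ' := measurable_deriv φ
    exact (((hφ'.aemeasurable.pow_const 2).add ((aemeasurable_const.mul (hφm.pow_const 2)).div
      (hs.aemeasurable.pow_const 2))).mul (hs.aemeasurable.pow_const m)).aestronglyMeasurable
  refine Integrable.of_bound hmeas ((K ^ 2 + |c| * K ^ 2) * snk κ R ^ m) ?_
  filter_upwards [ae_restrict_mem measurableSet_Ioo] with r hr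
  have hs := snk_pos hκ hr.1
  have hφ'r : |deriv φ r| ≤ K := by
    simpa using norm_deriv_le_of_lipschitzOn (Icc_mem_nhds hr.1 hr.2) hφ
  have hφr : |φ r / snk κ r| ≤ K := by
    rw [abs_div, abs_of_pos hs, div_le_iff₀ hs]
    exact (abs_le_mul_of_lipschitzOnWith hφ hφ0 (Ioo_subset_Icc_self hr)).trans
      (by gcongr; exact le_snk hκ hr.1.le)
  have hsR : snk κ r ^ m ≤ snk κ R ^ m := by gcongr; exact monotone_snk κ hr.2.le
  calc ‖energyDensity κ c m φ r‖
      = |deriv φ r ^ 2 + c * (φ r / snk κ r) ^ 2| * snk κ r ^ m := by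
        rw [energyDensity, Real.norm_eq_abs, abs_mul, abs_of_pos (pow_pos hs m), div_pow,
          mul_div_assoc]
    _ ≤ (|deriv φ r| ^ 2 + |c| * |φ r / snk κ r| ^ 2) * snk κ r ^ m := by
        gcongr
        refine (abs_add_le _ _).trans_eq ?_
        rw [abs_mul, abs_pow, abs_pow]
    _ ≤ (K ^ 2 + |c| * K ^ 2) * snk κ R ^ m := by gcongr

end Lipschitz

theorem steklov_ball_variational_general
    (κ : ℝ) (hκ : κ ≤ 0) (n : ℕ) (hn : 2 ≤ n) (F : ℝ → ℝ)
    (hF2 : ContDiffOn ℝ 2 F (Ioi 0))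
    (hF0 : F 0 = 0)
    (hF'0 : HasDerivWithinAt F 1 (Ici 0) 0)
    (hODE : ∀ r > 0, deriv (deriv F) r
      + ((n : ℝ) - 1) * (deriv (snk κ) r / snk κ r) * deriv F r
      - (((n : ℝ) - 1) / (snk κ r) ^ 2) * F r = 0)
    (hFpos : ∀ r > 0, 0 < F r) (hF'pos : ∀ r > 0, 0 < deriv F r) :
    ∀ R > 0,
      (∀ φ : ℝ → ℝ, ContDiffOn ℝ 1 φ (Icc 0 R) → φ 0 = 0 → φ R ≠ 0 →
        deriv F R / F R * ((φ R) ^ 2 * snk κ R ^ (n - 1)) ≤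
          ∫ r in (0 : ℝ)..R,
            ((deriv φ r) ^ 2 + ((n : ℝ) - 1) * (φ r) ^ 2 / (snk κ r) ^ 2) * snk κ r ^ (n - 1)) ∧
      (∫ r in (0 : ℝ)..R,
          ((deriv F r) ^ 2 + ((n : ℝ) - 1) * (F r) ^ 2 / (snk κ r) ^ 2) * snk κ r ^ (n - 1)) =
        deriv F R / F R * ((F R) ^ 2 * snk κ R ^ (n - 1)) := by
  intro R hR
  have hm : ((n - 1 : ℕ) : ℝ) = (n : ℝ) - 1 := by rw [Nat.cast_sub (by omega), Nat.cast_one]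
  have hc : 0 ≤ (n : ℝ) - 1 := by rw [← hm]; positivity
  have hsol : IsRadialSolution κ ((n : ℝ) - 1) (n - 1) F :=
    ⟨hF2.differentiableOn two_ne_zero,
      (hF2.deriv_of_isOpen isOpen_Ioi (by norm_num : (1 : WithTop ℕ∞) + 1 ≤ 2)).differentiableOn
        one_ne_zero,
      fun r hr => by rw [hm]; exact hODE r hr, hFpos, hF'pos⟩
  refine ⟨fun φ hφ hφ0 _ => ?_,
    hsol.integral_energyDensity_self hκ hc hR.le hF0 hF'0.continuousWithinAt⟩
  obtain ⟨K, hK⟩ := hφ.exists_lipschitzOnWith one_ne_zero (convex_Icc 0 R) isCompact_Icc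
  exact hsol.piconeTerm_le_integral hκ hc hR.le hK.continuousOn
    (fun r hr => (hφ.differentiableOn one_ne_zero r (Ioo_subset_Icc_self hr)).differentiableAt
      (Icc_mem_nhds hr.1 hr.2))
    hφ0 (tendsto_sq_div_of_lipschitzOnWith hK hφ0 hR one_half_pos
      (eventually_mul_le_of_hasDerivWithinAt hF0 hF'0 one_half_lt_one))
    (integrableOn_energyDensity hκ _ _ hK hφ0)

/-- One-dimensional variational characterization of `σ₁` of the geodesic ball: for every
`C¹` function `φ : [0,R] → ℝ` with `φ(0) = 0` and `φ(R) ≠ 0`,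
`∫₀^R (φ'² + (n-1)φ²/sn_κ²) sn_κ^{n-1} dr ≥ (F'(R)/F(R)) φ(R)² sn_κ(R)^{n-1}`,
with equality when `φ = F`. -/
theorem steklov_ball_variational
    (κ : ℝ) (hκ : κ ≤ 0) (n : ℕ) (hn : 2 ≤ n) (F : ℝ → ℝ)
    (hFc : ContinuousOn F (Ici 0))
    (hF2 : ContDiffOn ℝ 2 F (Ioi 0))
    (hF0 : F 0 = 0)
    (hF'0 : HasDerivWithinAt F 1 (Ici 0) 0)
    (hODE : ∀ r > 0, deriv (deriv F) r
      + ((n : ℝ) - 1) * (deriv (snk κ) r / snk κ r) * deriv F r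
      - (((n : ℝ) - 1) / (snk κ r) ^ 2) * F r = 0)
    (hFpos : ∀ r > 0, 0 < F r) (hF'pos : ∀ r > 0, 0 < deriv F r) :
    ∀ R > 0,
      (∀ φ : ℝ → ℝ, ContDiffOn ℝ 1 φ (Icc 0 R) → φ 0 = 0 → φ R ≠ 0 →
        deriv F R / F R * ((φ R) ^ 2 * snk κ R ^ (n - 1)) ≤
          ∫ r in (0 : ℝ)..R,
            ((deriv φ r) ^ 2 + ((n : ℝ) - 1) * (φ r) ^ 2 / (snk κ r) ^ 2) * snk κ r ^ (n - 1)) ∧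
      (∫ r in (0 : ℝ)..R,
          ((deriv F r) ^ 2 + ((n : ℝ) - 1) * (F r) ^ 2 / (snk κ r) ^ 2) * snk κ r ^ (n - 1)) =
        deriv F R / F R * ((F R) ^ 2 * snk κ R ^ (n - 1)) :=
  steklov_ball_variational_general κ hκ n hn F hF2 hF0 hF'0 hODE hFpos hF'pos
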